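/- arXiv:1206.4723 — 5 statements merged into one kernel-verified Lean document; each statement's English description precedes it below -/
import Mathlib

section
/- Let K ≥ 1 and for each l ∈ {1,…,K} let λ_l > 0, P_l > 0, B_l > 0, ε_l > 2 and m_l > 0 be given, and set a_l = λ_l·π·(P_l B_l)^{2/ε_l}·m_l. Let R₁,…,R_K be independent nonnegative random variables such that P(R_l > r) = exp(−a_l·r^{2/ε_l}) for all r ≥ 0 and all l. Then for every k ∈ {1,…,K}, the probability that R_k is strictly smaller than all the other variables satisfies P(R_k < R_l for all l ≠ k) = ∫_0^∞ λ_k·m_k·2π·t·exp(−Σ_{l=1}^K λ_l·m_l·π·(P_l B_l/(P_k B_k))^{2/ε_l}·t^{2ε_k/ε_l}) dt. -/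
/-!
With `p_l = 2 / ε_l`, each `R_l` has the Weibull law with density
`a_l p_l r ^ (p_l - 1) exp (-a_l r ^ p_l)` on `(0, ∞)`. By independence and Fubini, conditioning on
`R_k = r` gives `P(I = k) = ∫₀^∞ a_k p_k r ^ (p_k - 1) exp (-∑_l a_l r ^ p_l) dr`, and the substitution
`r = t ^ ε_k / (P_k B_k)` turns this into the stated integral.
-/

open MeasureTheory ProbabilityTheory Real

open Set Filter

/-- The density on `(0, ∞)` of the Weibull law with tail `exp (-(a * x ^ p))`. -/
noncomputable def weibullDensity (a p x : ℝ) : ℝ := a * p * x ^ (p - 1) * exp (-(a * x ^ p))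

noncomputable def weibullMeasure (a p : ℝ) : Measure ℝ :=
  (volume.restrict (Ioi 0)).withDensity fun x => ENNReal.ofReal (weibullDensity a p x)

section Weibull

variable {a p : ℝ}

lemma weibullDensity_nonneg (ha : 0 ≤ a) (hp : 0 ≤ p) {x : ℝ} (hx : 0 ≤ x) :
    0 ≤ weibullDensity a p x := by
  unfold weibullDensity
  positivity

lemma hasDerivAt_neg_exp_neg_mul_rpow {x : ℝ} (hx : 0 < x) :
    HasDerivAt (fun y => -exp (-(a * y ^ p))) (weibullDensity a p x) x := by
  have h : HasDerivAt (fun y => -exp (-(a * y ^ p)))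
      (-(exp (-(a * x ^ p)) * -(a * (p * x ^ (p - 1))))) x :=
    (((hasDerivAt_rpow_const (Or.inl hx.ne')).const_mul a).neg.exp).neg
  exact h.congr_deriv (by unfold weibullDensity; ring)

lemma lintegral_weibullDensity_Ioi (ha : 0 < a) (hp : 0 < p) {c : ℝ} (hc : 0 ≤ c) :
    ∫⁻ x in Ioi c, ENNReal.ofReal (weibullDensity a p x) = ENNReal.ofReal (exp (-(a * c ^ p))) := by
  have hcont : ContinuousWithinAt (fun y => -exp (-(a * y ^ p))) (Ici c) c :=
    ((continuousAt_rpow_const c p (Or.inr hp.le)).const_mul a).neg.rexp.neg.continuousWithinAt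
  have hderiv : ∀ x ∈ Ioi c, HasDerivAt (fun y => -exp (-(a * y ^ p))) (weibullDensity a p x) x :=
    fun x hx => hasDerivAt_neg_exp_neg_mul_rpow (hc.trans_lt hx)
  have hnonneg : ∀ x ∈ Ioi c, 0 ≤ weibullDensity a p x :=
    fun x hx => weibullDensity_nonneg ha.le hp.le (hc.trans (le_of_lt hx))
  have hlim : Tendsto (fun y => -exp (-(a * y ^ p))) atTop (nhds 0) := by
    simpa using (tendsto_exp_neg_atTop_nhds_zero.comp
      ((tendsto_rpow_atTop hp).const_mul_atTop ha)).neg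
  have hint := integrableOn_Ioi_deriv_of_nonneg hcont hderiv hnonneg hlim
  rw [← ofReal_integral_eq_lintegral_ofReal hint
    ((ae_restrict_iff' measurableSet_Ioi).2 (Eventually.of_forall hnonneg)),
    integral_Ioi_of_hasDerivAt_of_tendsto hcont hderiv hint hlim]
  simp

lemma weibullMeasure_Ioi (ha : 0 < a) (hp : 0 < p) (r : ℝ) :
    weibullMeasure a p (Ioi r) = ENNReal.ofReal (exp (-(a * max r 0 ^ p))) := by
  rw [weibullMeasure, withDensity_apply _ measurableSet_Ioi,
    Measure.restrict_restrict measurableSet_Ioi, Ioi_inter_Ioi]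
  exact lintegral_weibullDensity_Ioi ha hp (le_max_right r 0)

lemma isProbabilityMeasure_weibullMeasure (ha : 0 < a) (hp : 0 < p) :
    IsProbabilityMeasure (weibullMeasure a p) := by
  constructor
  rw [weibullMeasure, withDensity_apply _ MeasurableSet.univ, Measure.restrict_univ,
    lintegral_weibullDensity_Ioi ha hp le_rfl, zero_rpow hp.ne']
  simp

lemma ext_of_Ioi_of_isProbabilityMeasure {μ ν : Measure ℝ} [IsProbabilityMeasure μ]
    [IsProbabilityMeasure ν] (h : ∀ r, μ (Ioi r) = ν (Ioi r)) : μ = ν :=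
  Measure.ext_of_Iic μ ν fun r => by
    rw [← compl_Ioi, prob_compl_eq_one_sub measurableSet_Ioi,
      prob_compl_eq_one_sub measurableSet_Ioi, h]

lemma eq_weibullMeasure_of_tail (ha : 0 < a) (hp : 0 < p) {μ : Measure ℝ}
    [IsProbabilityMeasure μ]
    (htail : ∀ r, 0 ≤ r → μ (Ioi r) = ENNReal.ofReal (exp (-(a * r ^ p)))) :
    μ = weibullMeasure a p := by
  have := isProbabilityMeasure_weibullMeasure ha hp
  refine ext_of_Ioi_of_isProbabilityMeasure fun r => ?_
  rw [weibullMeasure_Ioi ha hp]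
  rcases le_total 0 r with hr | hr
  · rw [max_eq_left hr, htail r hr]
  · have hμ0 : μ (Ioi 0) = 1 := by simp [htail 0 le_rfl, zero_rpow hp.ne']
    rw [max_eq_right hr, zero_rpow hp.ne']
    simpa using le_antisymm prob_le_one (hμ0 ▸ measure_mono (Ioi_subset_Ioi hr))

end Weibull

lemma measure_forall_lt_eq_lintegral {Ω : Type*} [MeasurableSpace Ω] {μ : Measure Ω} {n : ℕ}
    {X : Fin (n + 1) → Ω → ℝ} (hX : ∀ l, Measurable (X l)) (hindep : iIndepFun X μ)
    (k : Fin (n + 1)) :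
    μ {ω | ∀ l, l ≠ k → X k ω < X l ω}
      = ∫⁻ r, ∏ j, μ.map (X (k.succAbove j)) (Ioi r) ∂(μ.map (X k)) := by
  have := hindep.isProbabilityMeasure
  set e := MeasurableEquiv.piFinSuccAbove (fun _ : Fin (n + 1) => ℝ) k
  set T : Set (ℝ × (Fin n → ℝ)) := {y | ∀ j, y.1 < y.2 j}
  have hT : MeasurableSet T := by
    simp only [T, ofPred_forall]
    exact .iInter fun j =>
      measurableSet_lt measurable_fst ((measurable_pi_apply j).comp measurable_snd)
  have hpre : (fun ω l => X l ω) ⁻¹' (e ⁻¹' T) = {ω | ∀ l, l ≠ k → X k ω < X l ω} := by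
    ext ω
    simp only [T, e, mem_preimage, mem_ofPred_eq, MeasurableEquiv.piFinSuccAbove_apply,
      Fin.removeNth, Fin.insertNthEquiv, Equiv.coe_fn_symm_mk]
    refine ⟨fun h l hl => ?_, fun h j => h _ (Fin.succAbove_ne k j)⟩
    obtain ⟨j, rfl⟩ := Fin.exists_succAbove_eq hl
    exact h j
  rw [← hpre, ← Measure.map_apply (measurable_pi_lambda _ hX) (e.measurable hT),
    hindep.map_fun_eq_pi_map fun l => (hX l).aemeasurable,
    (measurePreserving_piFinSuccAbove _ k).measure_preimage hT.nullMeasurableSet,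
    Measure.prod_apply hT]
  refine lintegral_congr fun r => ?_
  have hbox : Prod.mk r ⁻¹' T = univ.pi fun _ => Ioi r := by ext; simp [T, Set.mem_pi]
  rw [hbox, Measure.pi_pi]

lemma measure_forall_lt_eq_integral_of_weibull {Ω : Type*} [MeasurableSpace Ω] {μ : Measure Ω}
    {n : ℕ} {X : Fin (n + 1) → Ω → ℝ} (hX : ∀ l, Measurable (X l)) (hindep : iIndepFun X μ)
    {a p : Fin (n + 1) → ℝ} (ha : ∀ l, 0 < a l) (hp : ∀ l, 0 < p l)
    (htail : ∀ l, ∀ r : ℝ, 0 ≤ r → μ {ω | r < X l ω} = ENNReal.ofReal (exp (-(a l * r ^ p l))))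
    (k : Fin (n + 1)) :
    μ {ω | ∀ l, l ≠ k → X k ω < X l ω}
      = ENNReal.ofReal (∫ r in Ioi 0, a k * p k * r ^ (p k - 1) * exp (-∑ l, a l * r ^ p l)) := by
  have := hindep.isProbabilityMeasure
  have hlaw : ∀ l, μ.map (X l) = weibullMeasure (a l) (p l) := fun l => by
    have := Measure.isProbabilityMeasure_map (μ := μ) (hX l).aemeasurable
    refine eq_weibullMeasure_of_tail (ha l) (hp l) fun r hr => ?_
    rw [Measure.map_apply (hX l) measurableSet_Ioi]
    exact htail l r hr
  have hdensity : ∀ r ∈ Ioi (0 : ℝ),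
      ENNReal.ofReal (weibullDensity (a k) (p k) r)
        * ∏ j, ENNReal.ofReal (exp (-(a (k.succAbove j) * max r 0 ^ p (k.succAbove j))))
      = ENNReal.ofReal (a k * p k * r ^ (p k - 1) * exp (-∑ l, a l * r ^ p l)) := by
    intro r hr
    rw [max_eq_left (le_of_lt hr), ← ENNReal.ofReal_prod_of_nonneg fun _ _ => (exp_pos _).le,
      ← ENNReal.ofReal_mul (weibullDensity_nonneg (ha k).le (hp k).le (le_of_lt hr)),
      ← exp_sum, weibullDensity, Fin.sum_univ_succAbove _ k, neg_add, exp_add,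
      Finset.sum_neg_distrib]
    congr 1
    ring
  have hlintegral : μ {ω | ∀ l, l ≠ k → X k ω < X l ω}
      = ∫⁻ r in Ioi 0, ENNReal.ofReal (a k * p k * r ^ (p k - 1) * exp (-∑ l, a l * r ^ p l)) := by
    simp only [measure_forall_lt_eq_lintegral hX hindep k, hlaw, weibullMeasure_Ioi (ha _) (hp _)]
    rw [weibullMeasure, lintegral_withDensity_eq_lintegral_mul _
      (by unfold weibullDensity; fun_prop) (by fun_prop)]
    exact setLIntegral_congr_fun measurableSet_Ioi hdensity
  rw [hlintegral, integral_eq_lintegral_of_nonneg_ae, ENNReal.ofReal_toReal]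
  · exact hlintegral ▸ measure_ne_top _ _
  · refine (ae_restrict_iff' measurableSet_Ioi).2 (Eventually.of_forall fun r hr => ?_)
    have := (ha k).le; have := (hp k).le; have : 0 ≤ r := le_of_lt hr
    positivity
  · fun_prop

lemma integral_comp_const_mul_rpow_Ioi {E : Type*} [NormedAddCommGroup E] [NormedSpace ℝ E]
    (g : ℝ → E) {c q : ℝ} (hc : 0 < c) (hq : 0 < q) :
    ∫ t in Ioi 0, (c * q * t ^ (q - 1)) • g (c * t ^ q) = ∫ r in Ioi 0, g r :=
  calc ∫ t in Ioi 0, (c * q * t ^ (q - 1)) • g (c * t ^ q)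
      = ∫ t in Ioi 0, (q * t ^ (q - 1)) • c • g (c * t ^ q) := by
        simp only [smul_smul, mul_comm c, mul_assoc]
    _ = c • ∫ s in Ioi 0, g (c * s) := by
        rw [integral_comp_rpow_Ioi_of_pos (g := fun s => c • g (c * s)) hq, integral_smul]
    _ = ∫ r in Ioi 0, g r := by rw [integral_comp_mul_left_Ioi' g 0 hc, mul_zero]

lemma rpow_mul_inv_mul_rpow_rpow {x y t : ℝ} (hx : 0 ≤ x) (hy : 0 ≤ y) (ht : 0 ≤ t) (e s : ℝ) :
    x ^ s * (y⁻¹ * t ^ e) ^ s = (x / y) ^ s * t ^ (e * s) := by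
  rw [mul_rpow (inv_nonneg.2 hy) (rpow_nonneg ht e), ← rpow_mul ht, inv_rpow hy,
    div_rpow hx hy, div_eq_mul_inv, mul_assoc]

lemma weibull_prefactor_rescale {lam m y e t : ℝ} (hy : 0 < y) (he : 0 < e) (ht : 0 < t) :
    y⁻¹ * e * t ^ (e - 1) * (lam * π * y ^ (2 / e) * m * (2 / e) * (y⁻¹ * t ^ e) ^ (2 / e - 1))
      = lam * m * (2 * π) * t := by
  have hsq : y ^ (2 / e) * (y⁻¹ * t ^ e) ^ (2 / e) = t ^ 2 := by
    rw [rpow_mul_inv_mul_rpow_rpow hy.le hy.le ht.le, div_self hy.ne', one_rpow, one_mul,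
      mul_div_cancel₀ _ he.ne', rpow_two]
  have hu : 0 < y⁻¹ * t ^ e := by positivity
  rw [rpow_sub_one hu.ne', rpow_sub_one ht.ne']
  have hte : t ^ e ≠ 0 := (rpow_pos_of_pos ht e).ne'
  generalize (y⁻¹ * t ^ e) ^ (2 / e) = U at hsq ⊢
  field_simp
  linear_combination (lam * m) * hsq

theorem stmt1_general {Ω : Type*} [MeasureSpace Ω] [IsProbabilityMeasure (ℙ : Measure Ω)]
    (K : ℕ)
    (lam P B eps m a : Fin K → ℝ)
    (hlam : ∀ l, 0 < lam l) (hP : ∀ l, 0 < P l) (hB : ∀ l, 0 < B l)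
    (heps : ∀ l, 2 < eps l) (hm : ∀ l, 0 < m l)
    (ha : ∀ l, a l = lam l * π * (P l * B l) ^ (2 / eps l) * m l)
    (R : Fin K → Ω → ℝ) (hmeas : ∀ l, Measurable (R l))
    (hindep : iIndepFun R ℙ)
    (htail : ∀ l, ∀ r : ℝ, 0 ≤ r →
      ℙ {ω | r < R l ω} = ENNReal.ofReal (Real.exp (-(a l * r ^ (2 / eps l)))))
    (k : Fin K) :
    ℙ {ω | ∀ l, l ≠ k → R k ω < R l ω}
      = ENNReal.ofReal (∫ t in Set.Ioi (0:ℝ),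
          lam k * m k * (2 * π) * t *
            Real.exp (-(∑ l, lam l * m l * π *
              ((P l * B l) / (P k * B k)) ^ (2 / eps l) * t ^ (2 * eps k / eps l)))) := by
  obtain ⟨n, rfl⟩ := Nat.exists_eq_add_one.2 k.pos
  have hPB : ∀ l, 0 < P l * B l := fun l => mul_pos (hP l) (hB l)
  have heps0 : ∀ l, 0 < eps l := fun l => two_pos.trans (heps l)
  have ha0 : ∀ l, 0 < a l := fun l => by
    have := hlam l; have := hm l; have := hPB l
    rw [ha l]
    positivity
  rw [measure_forall_lt_eq_integral_of_weibull hmeas hindep ha0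
    (fun l => div_pos two_pos (heps0 l)) htail k]
  set f : ℝ → ℝ := fun r => a k * (2 / eps k) * r ^ (2 / eps k - 1) *
    exp (-∑ l, a l * r ^ (2 / eps l))
  have hsubst : ∀ t ∈ Ioi (0 : ℝ), lam k * m k * (2 * π) * t * exp (-(∑ l, lam l * m l * π *
      ((P l * B l) / (P k * B k)) ^ (2 / eps l) * t ^ (2 * eps k / eps l)))
      = ((P k * B k)⁻¹ * eps k * t ^ (eps k - 1)) • f ((P k * B k)⁻¹ * t ^ eps k) := by
    intro t ht
    have hexponent : ∀ l, a l * ((P k * B k)⁻¹ * t ^ eps k) ^ (2 / eps l)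
        = lam l * m l * π * ((P l * B l) / (P k * B k)) ^ (2 / eps l)
          * t ^ (2 * eps k / eps l) := fun l => by
      rw [ha l, show 2 * eps k / eps l = eps k * (2 / eps l) by ring]
      linear_combination (lam l * π * m l) *
        rpow_mul_inv_mul_rpow_rpow (hPB l).le (hPB k).le (le_of_lt ht) (eps k) (2 / eps l)
    simp only [f, smul_eq_mul, Finset.sum_congr rfl fun l _ => hexponent l]
    rw [← weibull_prefactor_rescale (lam := lam k) (m := m k) (hPB k) (heps0 k) ht, ha k]
    ring
  rw [setIntegral_congr_fun measurableSet_Ioi hsubst,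
    integral_comp_const_mul_rpow_Ioi f (inv_pos.2 (hPB k)) (heps0 k)]

/-- The probability that the tier-`k` nearest-BS distance is smaller than that of every other
tier (i.e. the serving BS belongs to tier `k`) is given by the integral formula of
Lemma 3 (general path-loss exponents). -/
theorem stmt1 {Ω : Type*} [MeasureSpace Ω] [IsProbabilityMeasure (ℙ : Measure Ω)]
    (K : ℕ) (hK : 1 ≤ K)
    (lam P B eps m a : Fin K → ℝ)
    (hlam : ∀ l, 0 < lam l) (hP : ∀ l, 0 < P l) (hB : ∀ l, 0 < B l)
    (heps : ∀ l, 2 < eps l) (hm : ∀ l, 0 < m l)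
    (ha : ∀ l, a l = lam l * π * (P l * B l) ^ (2 / eps l) * m l)
    (R : Fin K → Ω → ℝ) (hmeas : ∀ l, Measurable (R l))
    (hindep : iIndepFun R ℙ)
    (hnonneg : ∀ l ω, 0 ≤ R l ω)
    (htail : ∀ l, ∀ r : ℝ, 0 ≤ r →
      ℙ {ω | r < R l ω} = ENNReal.ofReal (Real.exp (-(a l * r ^ (2 / eps l)))))
    (k : Fin K) :
    ℙ {ω | ∀ l, l ≠ k → R k ω < R l ω}
      = ENNReal.ofReal (∫ t in Set.Ioi (0:ℝ),
          lam k * m k * (2 * π) * t *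
            Real.exp (-(∑ l, lam l * m l * π *
              ((P l * B l) / (P k * B k)) ^ (2 / eps l) * t ^ (2 * eps k / eps l)))) :=
  stmt1_general K lam P B eps m a hlam hP hB heps hm ha R hmeas hindep htail k
end

section
/- Let K ≥ 1, let ε > 2, and for each l ∈ {1,…,K} let λ_l > 0, P_l > 0, B_l > 0 and m_l > 0 be given, and set a_l = λ_l·π·(P_l B_l)^{2/ε}·m_l. Let R₁,…,R_K be independent nonnegative random variables with P(R_l > r) = exp(−a_l·r^{2/ε}) for all r ≥ 0 and all l. Then for every k ∈ {1,…,K}, P(R_k < R_l for all l ≠ k) = (λ_k·m_k·(P_k B_k)^{2/ε}) / (Σ_{m=1}^K λ_m·m_m·(P_m B_m)^{2/ε}). -/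
/-!
Conditioning on `R k = r`, independence turns the probability into the expectation of
`∏_{l ≠ k} P(R l > r) = exp (-c r ^ p)` under the law of `R k`, where `p = 2 / ε` and
`c = ∑_{l ≠ k} a l`. By the layer-cake formula this expectation is
`∫₀¹ P(exp (-c (R k) ^ p) ≥ t) dt = ∫₀¹ (1 - t ^ (a k / c)) dt = a k / (a k + c) = a k / ∑ a`,
and the common factor `π` of the `a l` cancels.
-/

open MeasureTheory ProbabilityTheory Real Set
open scoped ENNReal

theorem measure_forall_lt_eq_lintegral_prod {Ω ι : Type*} [MeasurableSpace Ω] {μ : Measure Ω}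
    [IsProbabilityMeasure μ] [Fintype ι] [DecidableEq ι] {R : ι → Ω → ℝ}
    (hmeas : ∀ l, Measurable (R l)) (hindep : iIndepFun R μ) (k : ι) :
    μ {ω | ∀ l, l ≠ k → R k ω < R l ω}
      = ∫⁻ r, ∏ l ∈ {k}ᶜ, μ {ω | r < R l ω} ∂(μ.map (R k)) := by
  set T : Finset ι := {k}ᶜ
  set Y : Ω → T → ℝ := fun ω i => R i ω
  have hY : Measurable Y := measurable_pi_lambda _ fun i => hmeas i
  have hXY : IndepFun (R k) Y μ := by
    exact (hindep.indepFun_finset {k} T disjoint_compl_right hmeas).comp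
      (measurable_pi_apply ⟨k, Finset.mem_singleton_self k⟩) measurable_id
  set S : Set (ℝ × (T → ℝ)) := {x | ∀ i, x.1 < x.2 i}
  have hS : MeasurableSet S := by
    simp only [S, ofPred_forall]
    exact .iInter fun i =>
      measurableSet_lt measurable_fst ((measurable_pi_apply i).comp measurable_snd)
  have hevent : {ω | ∀ l, l ≠ k → R k ω < R l ω} = (fun ω => (R k ω, Y ω)) ⁻¹' S := by
    ext ω
    simp [S, Y, T]
  have hsection : ∀ r, μ.map Y (Prod.mk r ⁻¹' S) = ∏ l ∈ T, μ {ω | r < R l ω} := fun r => by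
    have hpre : Y ⁻¹' (Prod.mk r ⁻¹' S) = ⋂ l ∈ T, R l ⁻¹' Ioi r := by
      ext ω
      simp [S, Y]
    rw [Measure.map_apply hY (measurable_prodMk_left hS), hpre,
      hindep.meas_biInter fun l _ => ⟨Ioi r, measurableSet_Ioi, rfl⟩]
    rfl
  rw [hevent, ← Measure.map_apply ((hmeas k).prodMk hY) hS,
    (indepFun_iff_map_prod_eq_prod_map_map (hmeas k).aemeasurable hY.aemeasurable).1 hXY,
    Measure.prod_apply hS]
  simp_rw [hsection]

-- `max r 0` keeps the formula meaningful for `r < 0`, where `r ^ p` is a junk value.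
lemma measure_lt_eq_ofReal_exp_neg_mul_max_rpow {Ω : Type*} [MeasurableSpace Ω]
    {μ : Measure Ω} [IsProbabilityMeasure μ] {X : Ω → ℝ} {a p : ℝ} (hp : 0 < p)
    (hX : ∀ ω, 0 ≤ X ω)
    (htail : ∀ r, 0 ≤ r → μ {ω | r < X ω} = ENNReal.ofReal (exp (-(a * r ^ p)))) (r : ℝ) :
    μ {ω | r < X ω} = ENNReal.ofReal (exp (-(a * max r 0 ^ p))) := by
  rcases le_or_gt 0 r with hr | hr
  · rw [max_eq_left hr, htail r hr]
  · have huniv : {ω | r < X ω} = univ := eq_univ_of_forall fun ω => hr.trans_le (hX ω)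
    simp [huniv, max_eq_right hr.le, zero_rpow hp.ne']

lemma setOf_le_exp_neg_mul_max_rpow {c p t : ℝ} (hc : 0 < c) (hp : 0 < p) (ht : t ∈ Ioc 0 1) :
    {r : ℝ | t ≤ exp (-(c * max r 0 ^ p))} = Iic ((-log t / c) ^ p⁻¹) := by
  have hs : 0 ≤ -log t / c := div_nonneg (neg_nonneg.2 (log_nonpos ht.1.le ht.2)) hc.le
  ext r
  rw [mem_ofPred_eq, mem_Iic, ← log_le_iff_le_exp ht.1, le_neg, ← le_div_iff₀' hc,
    ← le_rpow_inv_iff_of_pos (le_max_right r 0) hs hp, max_le_iff]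
  simp [rpow_nonneg hs]

section Tail

variable {μ : Measure ℝ} [IsProbabilityMeasure μ] {a c p : ℝ}

lemma measure_setOf_le_exp_neg_mul_max_rpow {t : ℝ} (hc : 0 < c) (hp : 0 < p)
    (htail : ∀ r, 0 ≤ r → μ (Ioi r) = ENNReal.ofReal (exp (-(a * r ^ p)))) (ht : t ∈ Ioc 0 1) :
    μ {r | t ≤ exp (-(c * max r 0 ^ p))} = ENNReal.ofReal (1 - t ^ (a / c)) := by
  have hs : 0 ≤ -log t / c := div_nonneg (neg_nonneg.2 (log_nonpos ht.1.le ht.2)) hc.le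
  have hpow : exp (-(a * ((-log t / c) ^ p⁻¹) ^ p)) = t ^ (a / c) := by
    rw [rpow_inv_rpow hs hp.ne', rpow_def_of_pos ht.1]
    congr 1
    field_simp
  rw [setOf_le_exp_neg_mul_max_rpow hc hp ht, ← compl_Ioi,
    prob_compl_eq_one_sub measurableSet_Ioi, htail _ (rpow_nonneg hs _), hpow,
    ← ENNReal.ofReal_one, ← ENNReal.ofReal_sub _ (rpow_nonneg ht.1.le _)]

lemma integral_one_sub_rpow {q : ℝ} (hq : -1 < q) :
    ∫ t in (0 : ℝ)..1, (1 - t ^ q) = q / (q + 1) := by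
  rw [intervalIntegral.integral_sub intervalIntegrable_const
    (intervalIntegral.intervalIntegrable_rpow' hq), integral_rpow (Or.inl hq)]
  have hq1 : q + 1 ≠ 0 := by linarith
  simp only [intervalIntegral.integral_const, sub_zero, smul_eq_mul, mul_one, one_rpow,
    zero_rpow hq1]
  field_simp
  ring

theorem lintegral_exp_neg_mul_max_rpow (ha : 0 < a) (hc : 0 ≤ c) (hp : 0 < p)
    (htail : ∀ r, 0 ≤ r → μ (Ioi r) = ENNReal.ofReal (exp (-(a * r ^ p)))) :
    ∫⁻ r, ENNReal.ofReal (exp (-(c * max r 0 ^ p))) ∂μ = ENNReal.ofReal (a / (a + c)) := by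
  rcases hc.eq_or_lt with rfl | hc
  · simp [ha.ne']
  have hf : Continuous fun r : ℝ => exp (-(c * max r 0 ^ p)) := by
    have := hp.le
    fun_prop (disch := assumption)
  have hq : 0 ≤ a / c := by positivity
  have hlevel : ∀ t ∈ Ioi (1 : ℝ), μ {r | t ≤ exp (-(c * max r 0 ^ p))} = 0 := fun t ht => by
    convert measure_empty (μ := μ)
    refine eq_empty_of_forall_notMem fun r hr => (lt_irrefl (1 : ℝ)) ?_
    calc (1 : ℝ) < t := ht
      _ ≤ exp (-(c * max r 0 ^ p)) := hr
      _ ≤ 1 := exp_le_one_iff.2 (neg_nonpos.2 (by positivity))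
  rw [lintegral_eq_lintegral_meas_le μ (.of_forall fun r => (exp_pos _).le) hf.aemeasurable,
    ← Ioc_union_Ioi_eq_Ioi zero_le_one, lintegral_union measurableSet_Ioi Ioc_disjoint_Ioi_same,
    setLIntegral_congr_fun measurableSet_Ioi hlevel, lintegral_zero, add_zero,
    setLIntegral_congr_fun measurableSet_Ioc
      fun t ht => measure_setOf_le_exp_neg_mul_max_rpow hc hp htail ht,
    ← ofReal_integral_eq_lintegral_ofReal, ← intervalIntegral.integral_of_le zero_le_one,
    integral_one_sub_rpow (by linarith)]
  · congr 1
    field_simp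
  · exact (intervalIntegrable_const.sub
      (intervalIntegral.intervalIntegrable_rpow' (by linarith))).1
  · filter_upwards [ae_restrict_mem measurableSet_Ioc] with t ht
    exact sub_nonneg.2 (rpow_le_one ht.1.le ht.2 hq)

end Tail

theorem stmt2_general {Ω : Type*} [MeasureSpace Ω] [IsProbabilityMeasure (ℙ : Measure Ω)]
    (K : ℕ) (eps : ℝ) (heps : 2 < eps)
    (lam P B m a : Fin K → ℝ)
    (hlam : ∀ l, 0 < lam l) (hP : ∀ l, 0 < P l) (hB : ∀ l, 0 < B l)
    (hm : ∀ l, 0 < m l)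
    (ha : ∀ l, a l = lam l * π * (P l * B l) ^ (2 / eps) * m l)
    (R : Fin K → Ω → ℝ) (hmeas : ∀ l, Measurable (R l))
    (hindep : iIndepFun R ℙ)
    (hnonneg : ∀ l ω, 0 ≤ R l ω)
    (htail : ∀ l, ∀ r : ℝ, 0 ≤ r →
      ℙ {ω | r < R l ω} = ENNReal.ofReal (Real.exp (-(a l * r ^ (2 / eps)))))
    (k : Fin K) :
    ℙ {ω | ∀ l, l ≠ k → R k ω < R l ω}
      = ENNReal.ofReal ((lam k * m k * (P k * B k) ^ (2 / eps)) /
          (∑ i, lam i * m i * (P i * B i) ^ (2 / eps))) := by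
  have hp : 0 < 2 / eps := div_pos two_pos (by linarith)
  have ha' : ∀ l, a l = π * (lam l * m l * (P l * B l) ^ (2 / eps)) := fun l => by
    rw [ha l]; ring
  have hapos : ∀ l, 0 < a l := fun l => by
    have := hlam l; have := hm l; have := hP l; have := hB l
    rw [ha' l]; positivity
  have hlaw : ∀ r, 0 ≤ r →
      Measure.map (R k) ℙ (Ioi r) = ENNReal.ofReal (exp (-(a k * r ^ (2 / eps)))) :=
    fun r hr => by rw [Measure.map_apply (hmeas k) measurableSet_Ioi]; exact htail k r hr
  have hothers : ∀ r, ∏ l ∈ {k}ᶜ, ℙ {ω | r < R l ω}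
      = ENNReal.ofReal (exp (-((∑ l ∈ {k}ᶜ, a l) * max r 0 ^ (2 / eps)))) := fun r => by
    simp_rw [measure_lt_eq_ofReal_exp_neg_mul_max_rpow hp (hnonneg _) (htail _),
      ← ENNReal.ofReal_prod_of_nonneg fun _ _ => (exp_pos _).le, ← exp_sum, Finset.sum_mul,
      Finset.sum_neg_distrib]
  have := Measure.isProbabilityMeasure_map (μ := (ℙ : Measure Ω)) (hmeas k).aemeasurable
  rw [measure_forall_lt_eq_lintegral_prod hmeas hindep k, lintegral_congr hothers,
    lintegral_exp_neg_mul_max_rpow (hapos k) (Finset.sum_nonneg fun l _ => (hapos l).le) hp hlaw,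
    ← Fintype.sum_eq_add_sum_compl, Finset.sum_congr rfl fun l _ => ha' l, ha' k,
    ← Finset.mul_sum, mul_div_mul_left _ _ pi_ne_zero]

/-- When all tiers share a common path-loss exponent `ε`, the probability that the serving BS
belongs to tier `k` has the closed form
`λ_k m_k (P_k B_k)^{2/ε} / Σ_m λ_m m_m (P_m B_m)^{2/ε}`. -/
theorem stmt2 {Ω : Type*} [MeasureSpace Ω] [IsProbabilityMeasure (ℙ : Measure Ω)]
    (K : ℕ) (hK : 1 ≤ K) (eps : ℝ) (heps : 2 < eps)
    (lam P B m a : Fin K → ℝ)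
    (hlam : ∀ l, 0 < lam l) (hP : ∀ l, 0 < P l) (hB : ∀ l, 0 < B l)
    (hm : ∀ l, 0 < m l)
    (ha : ∀ l, a l = lam l * π * (P l * B l) ^ (2 / eps) * m l)
    (R : Fin K → Ω → ℝ) (hmeas : ∀ l, Measurable (R l))
    (hindep : iIndepFun R ℙ)
    (hnonneg : ∀ l ω, 0 ≤ R l ω)
    (htail : ∀ l, ∀ r : ℝ, 0 ≤ r →
      ℙ {ω | r < R l ω} = ENNReal.ofReal (Real.exp (-(a l * r ^ (2 / eps)))))
    (k : Fin K) :
    ℙ {ω | ∀ l, l ≠ k → R k ω < R l ω}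
      = ENNReal.ofReal ((lam k * m k * (P k * B k) ^ (2 / eps)) /
          (∑ i, lam i * m i * (P i * B i) ^ (2 / eps))) :=
  stmt2_general K eps heps lam P B m a hlam hP hB hm ha R hmeas hindep hnonneg htail k
end

section
/- Let K ≥ 1 and for each l ∈ {1,…,K} let λ_l > 0, P_l > 0, B_l > 0, ε_l > 2 and m_l > 0 be given, and set a_l = λ_l·π·(P_l B_l)^{2/ε_l}·m_l. Let R₁,…,R_K be independent nonnegative random variables such that P(R_l > r) = exp(−a_l·r^{2/ε_l}) for all r ≥ 0 and all l. Then for every k ∈ {1,…,K} and every r ≥ 0, the joint probability P(R_k > r and R_k < R_l for all l ≠ k) = ∫_r^∞ λ_k·(2π/ε_k)·(P_k B_k)^{2/ε_k}·m_k·t^{2/ε_k − 1}·exp(−Σ_{l=1}^K λ_l·π·(P_l B_l)^{2/ε_l}·m_l·t^{2/ε_l}) dt. -/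
/-!
Independence lets one condition on `R_k = t`: the other tiers then contribute
`∏_{l ≠ k} P(R_l > t) = exp (-∑_{l ≠ k} a_l t^{2/ε_l})`. The law of `R_k` has, on `(0, ∞)`, the
density `a_k (2/ε_k) t^{2/ε_k - 1} exp (-a_k t^{2/ε_k})`, the negative derivative of its tail.
Integrating the product over `t > r` gives the formula.
-/

open MeasureTheory ProbabilityTheory Real Set Filter Topology

theorem MeasureTheory.Measure.ext_of_Ioi_finite {α : Type*} [TopologicalSpace α]
    {m : MeasurableSpace α} [SecondCountableTopology α] [LinearOrder α] [OrderTopology α]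
    [BorelSpace α] (μ ν : Measure α) [IsFiniteMeasure μ] (huniv : μ univ = ν univ)
    (h : ∀ a, μ (Ioi a) = ν (Ioi a)) : μ = ν :=
  ext_of_generate_finite _ (BorelSpace.measurable_eq.trans (borel_eq_generateFrom_Ioi α))
    isPiSystem_Ioi (by rintro _ ⟨a, rfl⟩; exact h a) huniv

theorem lintegral_Ioi_of_hasDerivAt_neg {G φ : ℝ → ℝ} {s : ℝ}
    (hcont : ContinuousWithinAt G (Ici s) s) (hderiv : ∀ x ∈ Ioi s, HasDerivAt G (-φ x) x)
    (hφ : ∀ x ∈ Ioi s, 0 ≤ φ x) (hlim : Tendsto G atTop (𝓝 0)) :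
    ∫⁻ t in Ioi s, ENNReal.ofReal (φ t) = ENNReal.ofReal (G s) := by
  have hderiv' : ∀ x ∈ Ioi s, HasDerivAt (-G) (φ x) x := fun x hx => by
    simpa using (hderiv x hx).neg
  have hlim' : Tendsto (-G) atTop (𝓝 0) := by rw [← neg_zero]; exact hlim.neg
  rw [← ofReal_integral_eq_lintegral_ofReal
      (integrableOn_Ioi_deriv_of_nonneg hcont.neg hderiv' hφ hlim')
      ((ae_restrict_iff' measurableSet_Ioi).2 (ae_of_all _ hφ)),
    integral_Ioi_of_hasDerivAt_of_nonneg hcont.neg hderiv' hφ hlim', zero_sub, Pi.neg_apply,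
    neg_neg]

theorem MeasureTheory.Measure.restrict_Ioi_eq_withDensity_of_tail {ν : Measure ℝ}
    [IsFiniteMeasure ν] {G φ : ℝ → ℝ} {r : ℝ} (hcont : ContinuousOn G (Ici r))
    (hderiv : ∀ x ∈ Ioi r, HasDerivAt G (-φ x) x) (hφ : ∀ x ∈ Ioi r, 0 ≤ φ x)
    (hlim : Tendsto G atTop (𝓝 0)) (htail : ∀ s, r ≤ s → ν (Ioi s) = ENNReal.ofReal (G s)) :
    ν.restrict (Ioi r) =
      (volume.restrict (Ioi r)).withDensity fun t => ENNReal.ofReal (φ t) := by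
  have hlintegral : ∀ s, r ≤ s → ∫⁻ t in Ioi s, ENNReal.ofReal (φ t) = ν (Ioi s) := by
    intro s hs
    rw [htail s hs]
    exact lintegral_Ioi_of_hasDerivAt_neg ((hcont s hs).mono (Ici_subset_Ici.2 hs))
      (fun x hx => hderiv x (hs.trans_lt hx)) (fun x hx => hφ x (hs.trans_lt hx)) hlim
  refine Measure.ext_of_Ioi_finite _ _ ?_ fun s => ?_
  · rw [Measure.restrict_apply_univ, withDensity_apply _ MeasurableSet.univ,
      Measure.restrict_univ, hlintegral r le_rfl]
  · rw [Measure.restrict_apply measurableSet_Ioi, withDensity_apply _ measurableSet_Ioi,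
      Measure.restrict_restrict measurableSet_Ioi, Ioi_inter_Ioi, hlintegral _ le_sup_right]

theorem hasDerivAt_exp_neg_mul_rpow (c : ℝ) {q x : ℝ} (hx : 0 < x) :
    HasDerivAt (fun t => exp (-(c * t ^ q))) (-(c * q * x ^ (q - 1) * exp (-(c * x ^ q)))) x := by
  refine (((hasDerivAt_rpow_const (p := q) (Or.inl hx.ne')).const_mul c).neg).exp.congr_deriv ?_
  simp only [Pi.neg_apply]
  ring

theorem tendsto_exp_neg_mul_rpow_atTop {c q : ℝ} (hc : 0 < c) (hq : 0 < q) :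
    Tendsto (fun t => exp (-(c * t ^ q))) atTop (𝓝 0) :=
  tendsto_exp_atBot.comp <| tendsto_neg_atTop_atBot.comp <|
    (tendsto_rpow_atTop hq).const_mul_atTop hc

theorem MeasureTheory.Measure.restrict_Ioi_eq_withDensity_of_weibull_tail {ν : Measure ℝ}
    [IsFiniteMeasure ν] {c q r : ℝ} (hc : 0 < c) (hq : 0 < q) (hr : 0 ≤ r)
    (htail : ∀ s, r ≤ s → ν (Ioi s) = ENNReal.ofReal (exp (-(c * s ^ q)))) :
    ν.restrict (Ioi r) = (volume.restrict (Ioi r)).withDensity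
      fun t => ENNReal.ofReal (c * q * t ^ (q - 1) * exp (-(c * t ^ q))) :=
  ν.restrict_Ioi_eq_withDensity_of_tail
    (by fun_prop (disch := exact hq.le))
    (fun x hx => hasDerivAt_exp_neg_mul_rpow c (hr.trans_lt hx))
    (fun x hx => by have := hr.trans_lt hx; positivity)
    (tendsto_exp_neg_mul_rpow_atTop hc hq) htail

theorem ProbabilityTheory.iIndepFun.measure_gt_and_lt_forall_ne {Ω ι : Type*}
    [MeasurableSpace Ω] {μ : Measure Ω} [IsFiniteMeasure μ] [Fintype ι] [DecidableEq ι]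
    {X : ι → Ω → ℝ} (hindep : iIndepFun X μ) (hX : ∀ i, Measurable (X i)) (k : ι) (r : ℝ) :
    μ {ω | r < X k ω ∧ ∀ l, l ≠ k → X k ω < X l ω}
      = ∫⁻ x in Ioi r, ∏ l ∈ Finset.univ.erase k, μ {ω | x < X l ω} ∂(μ.map (X k)) := by
  set T := Finset.univ.erase k
  let Y : Ω → (T → ℝ) := fun ω l => X l ω
  have hY : Measurable Y := measurable_pi_lambda _ fun l => hX l
  have hindepY : IndepFun (X k) Y μ :=
    (hindep.indepFun_finset {k} T (by simp [T]) hX).comp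
      (measurable_pi_apply (⟨k, Finset.mem_singleton_self k⟩ : ({k} : Finset ι))) measurable_id
  let S : Set (ℝ × (T → ℝ)) := {p | ∀ l, p.1 < p.2 l}
  have hS : MeasurableSet S := by
    simp only [S, ofPred_forall]
    exact .iInter fun l =>
      measurableSet_lt measurable_fst ((measurable_pi_apply l).comp measurable_snd)
  have hsection : ∀ x, μ.map Y (Prod.mk x ⁻¹' S) = ∏ l ∈ T, μ {ω | x < X l ω} := by
    intro x
    have hpre : Y ⁻¹' (Prod.mk x ⁻¹' S) = ⋂ l ∈ T, {ω | x < X l ω} := by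
      ext ω; simp [Y, S]
    rw [Measure.map_apply hY (measurable_prodMk_left hS), hpre,
      hindep.meas_biInter (s := fun l => {ω | x < X l ω}) fun l _ =>
        ⟨Ioi x, measurableSet_Ioi, rfl⟩]
  have hevent : {ω | r < X k ω ∧ ∀ l, l ≠ k → X k ω < X l ω}
      = (fun ω => (X k ω, Y ω)) ⁻¹' (S ∩ Ioi r ×ˢ univ) := by
    ext ω; simp [Y, S, T, and_comm]
  rw [hevent, ← Measure.map_apply ((hX k).prodMk hY) (hS.inter (measurableSet_Ioi.prod .univ)),
    (indepFun_iff_map_prod_eq_prod_map_map (hX k).aemeasurable hY.aemeasurable).1 hindepY,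
    ← Measure.restrict_apply hS, ← Measure.restrict_prod_eq_prod_univ, Measure.prod_apply hS]
  exact lintegral_congr hsection

theorem ProbabilityTheory.iIndepFun.measure_gt_and_lt_forall_ne_of_weibull_tail {Ω ι : Type*}
    [MeasurableSpace Ω] {μ : Measure Ω} [IsFiniteMeasure μ] [Fintype ι] [DecidableEq ι]
    {X : ι → Ω → ℝ} (hindep : iIndepFun X μ) (hX : ∀ i, Measurable (X i)) {c q : ι → ℝ}
    (hc : ∀ i, 0 < c i) (hq : ∀ i, 0 < q i)
    (htail : ∀ i, ∀ s, 0 ≤ s → μ {ω | s < X i ω} = ENNReal.ofReal (exp (-(c i * s ^ q i))))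
    (k : ι) {r : ℝ} (hr : 0 ≤ r) :
    μ {ω | r < X k ω ∧ ∀ l, l ≠ k → X k ω < X l ω}
      = ENNReal.ofReal (∫ t in Ioi r, c k * q k * t ^ (q k - 1) * exp (-∑ l, c l * t ^ q l)) := by
  have hlaw := (μ.map (X k)).restrict_Ioi_eq_withDensity_of_weibull_tail (hc k) (hq k) hr
    fun s hs => by rw [Measure.map_apply (hX k) measurableSet_Ioi]; exact htail k s (hr.trans hs)
  have hdens_nonneg : ∀ t ∈ Ioi r, 0 ≤ c k * q k * t ^ (q k - 1) := fun t ht => by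
    have := hr.trans (le_of_lt ht); have := hc k; have := hq k; positivity
  suffices h : μ {ω | r < X k ω ∧ ∀ l, l ≠ k → X k ω < X l ω}
      = ∫⁻ t in Ioi r, ENNReal.ofReal (c k * q k * t ^ (q k - 1) * exp (-∑ l, c l * t ^ q l)) by
    rw [integral_eq_lintegral_of_nonneg_ae ((ae_restrict_iff' measurableSet_Ioi).2 <|
        ae_of_all _ fun t ht => mul_nonneg (hdens_nonneg t ht) (exp_pos _).le) (by fun_prop),
      ← h, ENNReal.ofReal_toReal (measure_ne_top _ _)]
  rw [hindep.measure_gt_and_lt_forall_ne hX k r, hlaw,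
    lintegral_withDensity_eq_lintegral_mul_non_measurable _ (by fun_prop)
      (ae_of_all _ fun _ => ENNReal.ofReal_lt_top)]
  refine setLIntegral_congr_fun measurableSet_Ioi fun t ht => ?_
  rw [Pi.mul_apply, Finset.prod_congr rfl fun l _ => htail l t (hr.trans (le_of_lt ht)),
    ← ENNReal.ofReal_prod_of_nonneg fun l _ => (exp_pos _).le,
    ← ENNReal.ofReal_mul (mul_nonneg (hdens_nonneg t ht) (exp_pos _).le), ← exp_sum,
    ← Finset.add_sum_erase _ _ (Finset.mem_univ k), neg_add, exp_add, Finset.sum_neg_distrib,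
    mul_assoc]

theorem stmt3_general {Ω : Type*} [MeasureSpace Ω] [IsProbabilityMeasure (ℙ : Measure Ω)]
    (K : ℕ)
    (lam P B eps m a : Fin K → ℝ)
    (hlam : ∀ l, 0 < lam l) (hP : ∀ l, 0 < P l) (hB : ∀ l, 0 < B l)
    (heps : ∀ l, 2 < eps l) (hm : ∀ l, 0 < m l)
    (ha : ∀ l, a l = lam l * π * (P l * B l) ^ (2 / eps l) * m l)
    (R : Fin K → Ω → ℝ) (hmeas : ∀ l, Measurable (R l))
    (hindep : iIndepFun R ℙ)
    (htail : ∀ l, ∀ r : ℝ, 0 ≤ r →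
      ℙ {ω | r < R l ω} = ENNReal.ofReal (Real.exp (-(a l * r ^ (2 / eps l)))))
    (k : Fin K) (r : ℝ) (hr : 0 ≤ r) :
    ℙ {ω | r < R k ω ∧ ∀ l, l ≠ k → R k ω < R l ω}
      = ENNReal.ofReal (∫ t in Set.Ioi r,
          lam k * (2 * π / eps k) * (P k * B k) ^ (2 / eps k) * m k * t ^ (2 / eps k - 1) *
            Real.exp (-(∑ l, lam l * π * (P l * B l) ^ (2 / eps l) * m l * t ^ (2 / eps l)))) := by
  have ha_pos : ∀ l, 0 < a l := fun l => by
    have := hlam l; have := hP l; have := hB l; have := hm l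
    rw [ha l]; positivity
  have hk : lam k * (2 * π / eps k) * (P k * B k) ^ (2 / eps k) * m k = a k * (2 / eps k) := by
    rw [ha k]; ring
  simp only [hk, ← ha]
  exact hindep.measure_gt_and_lt_forall_ne_of_weibull_tail hmeas ha_pos
    (fun l => div_pos two_pos (two_pos.trans (heps l))) htail k hr

/-- Joint probability that the tier-`k` nearest-BS distance exceeds `r` and is smaller than
the nearest-BS distances of all other tiers (serving BS in tier `k` at distance `> r`). -/
theorem stmt3 {Ω : Type*} [MeasureSpace Ω] [IsProbabilityMeasure (ℙ : Measure Ω)]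
    (K : ℕ) (hK : 1 ≤ K)
    (lam P B eps m a : Fin K → ℝ)
    (hlam : ∀ l, 0 < lam l) (hP : ∀ l, 0 < P l) (hB : ∀ l, 0 < B l)
    (heps : ∀ l, 2 < eps l) (hm : ∀ l, 0 < m l)
    (ha : ∀ l, a l = lam l * π * (P l * B l) ^ (2 / eps l) * m l)
    (R : Fin K → Ω → ℝ) (hmeas : ∀ l, Measurable (R l))
    (hindep : iIndepFun R ℙ)
    (hnonneg : ∀ l ω, 0 ≤ R l ω)
    (htail : ∀ l, ∀ r : ℝ, 0 ≤ r →
      ℙ {ω | r < R l ω} = ENNReal.ofReal (Real.exp (-(a l * r ^ (2 / eps l)))))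
    (k : Fin K) (r : ℝ) (hr : 0 ≤ r) :
    ℙ {ω | r < R k ω ∧ ∀ l, l ≠ k → R k ω < R l ω}
      = ENNReal.ofReal (∫ t in Set.Ioi r,
          lam k * (2 * π / eps k) * (P k * B k) ^ (2 / eps k) * m k * t ^ (2 / eps k - 1) *
            Real.exp (-(∑ l, lam l * π * (P l * B l) ^ (2 / eps l) * m l * t ^ (2 / eps l)))) :=
  stmt3_general K lam P B eps m a hlam hP hB heps hm ha R hmeas hindep htail k r hr
end

section
/- Let λ > 0, P > 0, B > 0, ε > 2, and let μ be a probability measure on (0,∞) such that m = ∫ ψ^{2/ε} dμ(ψ) is finite. Consider the map T : ℝ² × (0,∞) → [0,∞) defined by T(x, ψ) = ‖x‖^{ε} / (P·B·ψ). Then the pushforward under T of the product measure λ·(Lebesgue measure on ℝ²) ⊗ μ is the measure on [0,∞) that is absolutely continuous with respect to Lebesgue measure with density r ↦ λ·(2π/ε)·(P·B)^{2/ε}·m·r^{2/ε − 1}. Equivalently, for every s ≥ 0, λ·∫ (area of {x ∈ ℝ² : ‖x‖^{ε}/(P·B·ψ) ≤ s}) dμ(ψ) = λ·π·(P·B)^{2/ε}·m·s^{2/ε}.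 -/
/-!
For a mark `ψ > 0` the set `{x | ‖x‖^ε / (c ψ) ≤ s}` is the disc of radius `(c ψ s)^{1/ε}`, of area
`π c^{2/ε} s^{2/ε} ψ^{2/ε}`. Integrating over `ψ` (Tonelli) gives the pushforward of `(-∞, s]` as
`π c^{2/ε} m s^{2/ε}`, which is also the mass of `(-∞, s]` under the density
`(2π/ε) c^{2/ε} m r^{2/ε - 1}` on `(0, ∞)`. Two measures on `ℝ` taking the same finite values on
all half-lines `(-∞, s]` agree, and the intensity `λ` factors out of both sides.
-/

open MeasureTheory Real Set Metric

theorem MeasureTheory.Measure.ext_of_Iic_of_ne_top {α : Type*} [TopologicalSpace α]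
    {_ : MeasurableSpace α} [SecondCountableTopology α] [LinearOrder α] [OrderTopology α]
    [BorelSpace α] [NoMinOrder α] {ρ ν : Measure α} (hρ : ∀ a, ρ (Iic a) ≠ ⊤)
    (h : ∀ a, ρ (Iic a) = ν (Iic a)) : ρ = ν := by
  refine ρ.ext_of_Ioc' ν
    (fun _ b _ => ne_top_of_le_ne_top (hρ b) (measure_mono Ioc_subset_Iic_self)) fun a b hab => ?_
  rw [← Iic_sdiff_Iic, measure_sdiff (Iic_subset_Iic.2 hab.le) nullMeasurableSet_Iic (hρ a),
    measure_sdiff (Iic_subset_Iic.2 hab.le) nullMeasurableSet_Iic (h a ▸ hρ a), h, h]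

theorem setOf_norm_rpow_le_eq_closedBall {E : Type*} [SeminormedAddCommGroup E] {ε t : ℝ}
    (hε : 0 < ε) (ht : 0 ≤ t) : {x : E | ‖x‖ ^ ε ≤ t} = closedBall 0 (t ^ ε⁻¹) := by
  ext x
  rw [mem_closedBall_zero_iff, le_rpow_inv_iff_of_pos (norm_nonneg x) ht hε]
  exact Iff.rfl

theorem volume_setOf_norm_rpow_le {ε t : ℝ} (hε : 0 < ε) (ht : 0 ≤ t) :
    volume {x : EuclideanSpace ℝ (Fin 2) | ‖x‖ ^ ε ≤ t} = ENNReal.ofReal (π * t ^ (2 / ε)) := by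
  rw [setOf_norm_rpow_le_eq_closedBall hε ht, EuclideanSpace.volume_closedBall_fin_two,
    ← ENNReal.ofReal_pow (by positivity), ← ENNReal.ofReal_mul (by positivity), mul_comm,
    ← rpow_natCast, ← rpow_mul ht, Nat.cast_ofNat, inv_mul_eq_div]

theorem volume_setOf_norm_rpow_div_le {ε d : ℝ} (hε : 0 < ε) (hd : 0 < d) (s : ℝ) :
    volume {x : EuclideanSpace ℝ (Fin 2) | ‖x‖ ^ ε / d ≤ s}
      = ENNReal.ofReal (π * (d * max s 0) ^ (2 / ε)) := by
  rcases lt_or_ge s 0 with hs | hs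
  · have hempty : {x : EuclideanSpace ℝ (Fin 2) | ‖x‖ ^ ε / d ≤ s} = ∅ :=
      eq_empty_of_forall_notMem fun x hx => hs.not_ge ((by positivity : 0 ≤ ‖x‖ ^ ε / d).trans hx)
    simp [hempty, max_eq_right hs.le, zero_rpow (by positivity : 2 / ε ≠ 0)]
  · simp_rw [div_le_iff₀' hd, max_eq_left hs]
    exact volume_setOf_norm_rpow_le hε (by positivity)

theorem volume_setOf_norm_rpow_div_mul_le {ε c ψ : ℝ} (hε : 0 < ε) (hc : 0 < c) (hψ : 0 < ψ)
    (s : ℝ) :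
    volume {x : EuclideanSpace ℝ (Fin 2) | ‖x‖ ^ ε / (c * ψ) ≤ s}
      = ENNReal.ofReal (π * c ^ (2 / ε) * max s 0 ^ (2 / ε) * ψ ^ (2 / ε)) := by
  rw [volume_setOf_norm_rpow_div_le hε (mul_pos hc hψ), mul_right_comm,
    mul_rpow (by positivity) hψ.le, mul_rpow hc.le (le_max_right s 0)]
  ring_nf

theorem withDensity_indicator_Ioi_rpow_apply_Iic {a C : ℝ} (ha : 0 < a) (hC : 0 ≤ C) (s : ℝ) :
    volume.withDensity (fun r => (Ioi 0).indicator (fun r => ENNReal.ofReal (C * r ^ (a - 1))) r)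
        (Iic s)
      = ENNReal.ofReal (C / a * max s 0 ^ a) := by
  rw [withDensity_apply _ measurableSet_Iic, lintegral_indicator measurableSet_Ioi,
    Measure.restrict_restrict measurableSet_Ioi, Ioi_inter_Iic]
  rcases lt_or_ge s 0 with hs | hs
  · simp [Ioc_eq_empty_of_le hs.le, max_eq_right hs.le, zero_rpow ha.ne']
  have hint : IntegrableOn (fun r => C * r ^ (a - 1)) (Ioc 0 s) :=
    ((intervalIntegral.intervalIntegrable_rpow' (by linarith)).const_mul C).1
  rw [← ofReal_integral_eq_lintegral_ofReal hint
      ((ae_restrict_mem measurableSet_Ioc).mono fun r hr => by have := hr.1; positivity),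
    ← intervalIntegral.integral_of_le hs, intervalIntegral.integral_const_mul,
    integral_rpow (Or.inl (by linarith)), sub_add_cancel, zero_rpow ha.ne', max_eq_left hs]
  ring_nf

section

variable {ε c : ℝ} {μ : Measure ℝ} [SFinite μ]

theorem map_norm_rpow_div_mul_prod_apply_Iic (hε : 0 < ε) (hc : 0 < c)
    (hμ : ∀ᵐ ψ ∂μ, 0 < ψ) (hint : Integrable (fun ψ => ψ ^ (2 / ε)) μ) (s : ℝ) :
    ((volume : Measure (EuclideanSpace ℝ (Fin 2))).prod μ).map
        (fun p => ‖p.1‖ ^ ε / (c * p.2)) (Iic s)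
      = ENNReal.ofReal (π * c ^ (2 / ε) * max s 0 ^ (2 / ε) * ∫ ψ, ψ ^ (2 / ε) ∂μ) := by
  have hT : Measurable fun p : EuclideanSpace ℝ (Fin 2) × ℝ => ‖p.1‖ ^ ε / (c * p.2) := by
    fun_prop
  rw [Measure.map_apply hT measurableSet_Iic, Measure.prod_apply_symm (hT measurableSet_Iic),
    ← integral_const_mul, ofReal_integral_eq_lintegral_ofReal (hint.const_mul _)
      (hμ.mono fun ψ hψ => by positivity)]
  refine lintegral_congr_ae (hμ.mono fun ψ hψ => ?_)
  exact volume_setOf_norm_rpow_div_mul_le hε hc hψ s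

theorem map_norm_rpow_div_mul_prod_eq_withDensity (hε : 0 < ε) (hc : 0 < c)
    (hμ : ∀ᵐ ψ ∂μ, 0 < ψ) (hint : Integrable (fun ψ => ψ ^ (2 / ε)) μ) :
    ((volume : Measure (EuclideanSpace ℝ (Fin 2))).prod μ).map
        (fun p => ‖p.1‖ ^ ε / (c * p.2))
      = volume.withDensity (fun r => (Ioi 0).indicator (fun r => ENNReal.ofReal
          (2 * π / ε * c ^ (2 / ε) * (∫ ψ, ψ ^ (2 / ε) ∂μ) * r ^ (2 / ε - 1))) r) := by
  have hm : 0 ≤ ∫ ψ, ψ ^ (2 / ε) ∂μ := integral_nonneg_of_ae (hμ.mono fun ψ hψ => by positivity)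
  refine Measure.ext_of_Iic_of_ne_top (fun s => ?_) fun s => ?_
  · simp [map_norm_rpow_div_mul_prod_apply_Iic hε hc hμ hint s]
  rw [map_norm_rpow_div_mul_prod_apply_Iic hε hc hμ hint s,
    withDensity_indicator_Ioi_rpow_apply_Iic (by positivity) (by positivity) s]
  congr 1
  field_simp

end

theorem stmt5_general (lam P B eps : ℝ) (hP : 0 < P) (hB : 0 < B) (heps : 2 < eps)
    (μ : Measure ℝ) [IsProbabilityMeasure μ] (hμsupp : μ (Set.Iic 0) = 0)
    (hint : Integrable (fun ψ : ℝ => ψ ^ (2 / eps)) μ)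
    (m : ℝ) (hm : m = ∫ ψ, ψ ^ (2 / eps) ∂μ) :
    Measure.map (fun p : EuclideanSpace ℝ (Fin 2) × ℝ => ‖p.1‖ ^ eps / (P * B * p.2))
        ((ENNReal.ofReal lam • (volume : Measure (EuclideanSpace ℝ (Fin 2)))).prod μ)
      = volume.withDensity (fun r : ℝ =>
          Set.indicator (Set.Ioi (0:ℝ))
            (fun r => ENNReal.ofReal (lam * (2 * π / eps) * (P * B) ^ (2 / eps) * m *
              r ^ (2 / eps - 1))) r) ∧
    ∀ s : ℝ, 0 ≤ s →
      lam * ∫ ψ, (volume {x : EuclideanSpace ℝ (Fin 2) | ‖x‖ ^ eps / (P * B * ψ) ≤ s}).toReal ∂μ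
        = lam * π * (P * B) ^ (2 / eps) * m * s ^ (2 / eps) := by
  have hε : 0 < eps := by linarith
  have hPB : 0 < P * B := mul_pos hP hB
  have hμ : ∀ᵐ ψ ∂μ, 0 < ψ :=
    (measure_eq_zero_iff_ae_notMem.1 hμsupp).mono fun _ hψ => not_le.1 hψ
  have hm0 : 0 ≤ m := hm ▸ integral_nonneg_of_ae (hμ.mono fun ψ hψ => by positivity)
  subst hm
  refine ⟨?_, fun s hs => ?_⟩
  · rw [Measure.prod_smul_left, Measure.map_smul,
      map_norm_rpow_div_mul_prod_eq_withDensity hε hPB hμ hint,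
      ← withDensity_smul' _ _ ENNReal.ofReal_ne_top]
    congr 1
    funext r
    by_cases hr : r ∈ Ioi 0
    · have hr0 : 0 < r := hr
      rw [Pi.smul_apply, indicator_of_mem hr, indicator_of_mem hr, smul_eq_mul,
        ← ENNReal.ofReal_mul' (by positivity)]
      ring_nf
    · simp [indicator_of_notMem hr]
  · have hslice : (fun ψ => (volume {x : EuclideanSpace ℝ (Fin 2) |
          ‖x‖ ^ eps / (P * B * ψ) ≤ s}).toReal)
        =ᵐ[μ] fun ψ => π * (P * B) ^ (2 / eps) * s ^ (2 / eps) * ψ ^ (2 / eps) :=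
      hμ.mono fun ψ hψ => by
        dsimp only
        rw [volume_setOf_norm_rpow_div_mul_le hε hPB hψ s, max_eq_left hs,
          ENNReal.toReal_ofReal (by positivity)]
    rw [integral_congr_ae hslice, integral_const_mul]
    ring

/-- The pushforward of the marked planar intensity measure `λ·(Lebesgue ⊗ μ)` under
`(x, ψ) ↦ ‖x‖^ε / (P B ψ)` is absolutely continuous with respect to Lebesgue measure on
`[0, ∞)` with density `r ↦ λ (2π/ε) (P B)^{2/ε} m r^{2/ε - 1}`; equivalently, its value on
`[0, s]` is `λ π (P B)^{2/ε} m s^{2/ε}` for every `s ≥ 0`. -/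
theorem stmt5 (lam P B eps : ℝ) (hlam : 0 < lam) (hP : 0 < P) (hB : 0 < B) (heps : 2 < eps)
    (μ : Measure ℝ) [IsProbabilityMeasure μ] (hμsupp : μ (Set.Iic 0) = 0)
    (hint : Integrable (fun ψ : ℝ => ψ ^ (2 / eps)) μ)
    (m : ℝ) (hm : m = ∫ ψ, ψ ^ (2 / eps) ∂μ) :
    Measure.map (fun p : EuclideanSpace ℝ (Fin 2) × ℝ => ‖p.1‖ ^ eps / (P * B * p.2))
        ((ENNReal.ofReal lam • (volume : Measure (EuclideanSpace ℝ (Fin 2)))).prod μ)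
      = volume.withDensity (fun r : ℝ =>
          Set.indicator (Set.Ioi (0:ℝ))
            (fun r => ENNReal.ofReal (lam * (2 * π / eps) * (P * B) ^ (2 / eps) * m *
              r ^ (2 / eps - 1))) r) ∧
    ∀ s : ℝ, 0 ≤ s →
      lam * ∫ ψ, (volume {x : EuclideanSpace ℝ (Fin 2) | ‖x‖ ^ eps / (P * B * ψ) ≤ s}).toReal ∂μ
        = lam * π * (P * B) ^ (2 / eps) * m * s ^ (2 / eps) :=
  stmt5_general lam P B eps hP hB heps μ hμsupp hint m hm
end

section
/- Let 0 < a < 1 and z ∈ ℂ. Then the integral ∫_0^1 (e^{z u} − 1)·u^{−a−1} du converges absolutely and satisfies a·∫_0^1 (e^{z u} − 1)·u^{−a−1} du = Σ_{n=1}^∞ (a/(n − a))·z^n/n! = 1 − F_a(z), where F_a is the confluent hypergeometric function ₁F₁(−a; 1 − a; ·). -/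
/-!
Expanding `e^{zu} - 1 = Σ_{n ≥ 0} z^{n+1} u^{n+1}/(n+1)!` turns the integrand into a series of
powers `u^{n-a}`, each integrable on `(0, 1]` with integral `1/(n+1-a)`; the integrals of the
norms are dominated by `‖z‖^{n+1}/((n+1)! (1-a))`, so the series may be integrated termwise.
The Pochhammer ratio telescopes, `(-a)_{n+1}/(1-a)_{n+1} = -a/(n+1-a)`, so the resulting series
is `1 - ₁F₁(-a; 1-a; z)`.
-/

open MeasureTheory Real Complex

/-- The confluent hypergeometric function `₁F₁(-a; 1-a; z)`, defined by its everywhere-convergent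
power series `Σ_n ((-a)_n / (1-a)_n) zⁿ/n!`, where `(x)_n` is the (ascending) Pochhammer symbol. -/
noncomputable def confluentF (a : ℝ) (z : ℂ) : ℂ :=
  ∑' n : ℕ, ((ascPochhammer ℂ n).eval (-(a : ℂ)) / (ascPochhammer ℂ n).eval (1 - (a : ℂ)))
    * z ^ n / (Nat.factorial n : ℂ)

open Set

lemma integrableOn_Ioc_zero_one_rpow {r : ℝ} (hr : -1 < r) :
    IntegrableOn (fun u : ℝ => u ^ r) (Ioc 0 1) :=
  (intervalIntegral.intervalIntegrable_rpow' hr).1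

lemma integral_Ioc_zero_one_rpow {r : ℝ} (hr : -1 < r) :
    ∫ u in Ioc (0 : ℝ) 1, u ^ r = 1 / (r + 1) := by
  rw [← intervalIntegral.integral_of_le zero_le_one, integral_rpow (Or.inl hr), Real.one_rpow,
    Real.zero_rpow (by linarith), sub_zero]

lemma hasSum_exp_sub_one (w : ℂ) :
    HasSum (fun n : ℕ => w ^ (n + 1) / ((n + 1).factorial : ℂ)) (Complex.exp w - 1) := by
  have h : HasSum (fun n : ℕ => w ^ n / (n.factorial : ℂ)) (Complex.exp w) := by
    simpa [Complex.exp_eq_exp_ℂ] using NormedSpace.expSeries_div_hasSum_exp w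
  simpa using (hasSum_nat_add_iff' 1).2 h

lemma summable_norm_pow_succ_div_factorial (w : ℂ) :
    Summable fun n : ℕ => ‖w ^ (n + 1) / ((n + 1).factorial : ℂ)‖ := by
  simpa [norm_div, norm_pow] using
    (summable_nat_add_iff 1).2 (Real.summable_pow_div_factorial ‖w‖)

lemma integrableOn_Ioc_exp_sub_one_mul_rpow (z : ℂ) {s : ℝ} (hs : -2 < s) :
    IntegrableOn (fun u : ℝ => (Complex.exp (z * u) - 1) * ((u ^ s : ℝ) : ℂ)) (Ioc 0 1) := by
  have hmeas : AEStronglyMeasurable (fun u : ℝ => (Complex.exp (z * u) - 1) * ((u ^ s : ℝ) : ℂ))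
      (volume.restrict (Ioc 0 1)) := by
    refine ContinuousOn.aestronglyMeasurable ?_ measurableSet_Ioc
    exact ((by fun_prop : Continuous fun u : ℝ => Complex.exp (z * u) - 1).continuousOn).mul
      (Complex.continuous_ofReal.comp_continuousOn
        (continuousOn_id.rpow_const fun u hu => Or.inl hu.1.ne'))
  refine ((integrableOn_Ioc_zero_one_rpow (r := s + 1) (by linarith)).const_mul
    (‖z‖ * Real.exp ‖z‖)).mono' hmeas ?_
  filter_upwards [ae_restrict_mem measurableSet_Ioc] with u ⟨hu0, hu1⟩
  have hexp : ‖Complex.exp (z * u) - 1‖ ≤ ‖z‖ * u * Real.exp ‖z‖ := by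
    have hzu : ‖z * (u : ℂ)‖ = ‖z‖ * u := by
      rw [norm_mul, Complex.norm_real, Real.norm_of_nonneg hu0.le]
    calc ‖Complex.exp (z * u) - 1‖ ≤ ‖z * (u : ℂ)‖ * Real.exp ‖z * (u : ℂ)‖ := by
          simpa using Complex.norm_exp_sub_sum_le_norm_mul_exp (z * u) 1
      _ ≤ ‖z‖ * u * Real.exp ‖z‖ := by
          rw [hzu]
          gcongr
          nlinarith [norm_nonneg z]
  rw [norm_mul, Complex.norm_real, Real.norm_of_nonneg (Real.rpow_nonneg hu0.le _),
    Real.rpow_add_one hu0.ne']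
  calc ‖Complex.exp (z * u) - 1‖ * u ^ s ≤ ‖z‖ * u * Real.exp ‖z‖ * u ^ s := by gcongr
    _ = ‖z‖ * Real.exp ‖z‖ * (u ^ s * u) := by ring

lemma hasSum_exp_sub_one_mul_rpow (z : ℂ) (s : ℝ) {u : ℝ} (hu : 0 < u) :
    HasSum (fun n : ℕ => z ^ (n + 1) / ((n + 1).factorial : ℂ) * ((u ^ ((n : ℝ) + 1 + s) : ℝ) : ℂ))
      ((Complex.exp (z * u) - 1) * ((u ^ s : ℝ) : ℂ)) := by
  refine ((hasSum_exp_sub_one (z * u)).mul_right ((u ^ s : ℝ) : ℂ)).congr_fun fun n => ?_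
  have hnat : u ^ ((n : ℝ) + 1) = u ^ (n + 1) := by exact_mod_cast Real.rpow_natCast u (n + 1)
  rw [Real.rpow_add hu, hnat]
  push_cast
  ring

lemma hasSum_integral_Ioc_exp_sub_one_mul_rpow (z : ℂ) {s : ℝ} (hs : -2 < s) :
    HasSum (fun n : ℕ => z ^ (n + 1) / ((n + 1).factorial : ℂ) / ((n : ℂ) + 2 + s))
      (∫ u in Ioc (0 : ℝ) 1, (Complex.exp (z * u) - 1) * ((u ^ s : ℝ) : ℂ)) := by
  set c : ℕ → ℂ := fun n => z ^ (n + 1) / ((n + 1).factorial : ℂ)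
  have hr : ∀ n : ℕ, -1 < (n : ℝ) + 1 + s := fun n => by
    linarith [(n.cast_nonneg : (0 : ℝ) ≤ n)]
  have hpow : ∀ n : ℕ, (n : ℝ) + 1 + s + 1 = n + 2 + s := fun n => by ring
  have hint : ∀ n : ℕ, IntegrableOn (fun u : ℝ => c n * ((u ^ ((n : ℝ) + 1 + s) : ℝ) : ℂ))
      (Ioc 0 1) := fun n => (integrableOn_Ioc_zero_one_rpow (hr n)).ofReal.const_mul _
  have hnorm : ∀ n : ℕ,
      ∫ u in Ioc (0 : ℝ) 1, ‖c n * ((u ^ ((n : ℝ) + 1 + s) : ℝ) : ℂ)‖ = ‖c n‖ / (n + 2 + s) := by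
    intro n
    rw [setIntegral_congr_fun measurableSet_Ioc (g := fun u => ‖c n‖ * u ^ ((n : ℝ) + 1 + s))
      fun u hu => by simp [Real.norm_of_nonneg (Real.rpow_nonneg hu.1.le _)],
      integral_const_mul, integral_Ioc_zero_one_rpow (hr n), hpow, mul_one_div]
  have hsum : Summable fun n : ℕ =>
      ∫ u in Ioc (0 : ℝ) 1, ‖c n * ((u ^ ((n : ℝ) + 1 + s) : ℝ) : ℂ)‖ := by
    refine ((summable_norm_pow_succ_div_factorial z).div_const (2 + s)).of_nonneg_of_le
      (fun n => integral_nonneg fun u => norm_nonneg _) fun n => ?_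
    rw [hnorm]
    gcongr
    · linarith
    · exact le_add_of_nonneg_left n.cast_nonneg
  have key := hasSum_integral_of_summable_integral_norm hint hsum
  rw [setIntegral_congr_fun measurableSet_Ioc
    fun u hu => (hasSum_exp_sub_one_mul_rpow z s hu.1).tsum_eq] at key
  refine key.congr_fun fun n => ?_
  rw [integral_const_mul, integral_complex_ofReal, integral_Ioc_zero_one_rpow (hr n), hpow]
  push_cast
  ring

lemma ascPochhammer_eval_succ_div_eval_add_one {K : Type*} [Field K] (x : K) (n : ℕ)
    (h : (ascPochhammer K n).eval (x + 1) ≠ 0) :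
    (ascPochhammer K (n + 1)).eval x / (ascPochhammer K (n + 1)).eval (x + 1)
      = x / (x + 1 + n) := by
  rw [ascPochhammer_succ_eval _ (x + 1), ascPochhammer_succ_left, Polynomial.eval_mul,
    Polynomial.eval_X, Polynomial.eval_comp, Polynomial.eval_add, Polynomial.eval_X, Polynomial.eval_one,
    mul_comm x, mul_div_mul_left _ _ h]

lemma ascPochhammer_eval_one_sub_ofReal_ne_zero {a : ℝ} (ha : a < 1) (n : ℕ) :
    (ascPochhammer ℂ n).eval (1 - (a : ℂ)) ≠ 0 := by
  rw [Ne, ascPochhammer_eval_eq_zero_iff]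
  rintro ⟨k, -, hk⟩
  have hre := congrArg Complex.re hk
  simp only [Complex.natCast_re, Complex.neg_re, Complex.sub_re, Complex.ofReal_re,
    Complex.one_re] at hre
  linarith [(k.cast_nonneg : (0 : ℝ) ≤ k)]

lemma confluentF_eq_one_sub {a : ℝ} (ha : a < 1) (z : ℂ) {S : ℂ}
    (h : HasSum (fun n : ℕ => (a : ℂ) / ((n : ℂ) + 1 - a) * z ^ (n + 1) / ((n + 1).factorial : ℂ))
      S) :
    confluentF a z = 1 - S := by
  have hratio : ∀ n : ℕ, (ascPochhammer ℂ (n + 1)).eval (-(a : ℂ))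
      / (ascPochhammer ℂ (n + 1)).eval (1 - (a : ℂ)) = -((a : ℂ) / ((n : ℂ) + 1 - a)) := by
    intro n
    have hne := ascPochhammer_eval_one_sub_ofReal_ne_zero ha n
    rw [← neg_add_eq_sub] at hne ⊢
    rw [ascPochhammer_eval_succ_div_eval_add_one _ n hne]
    ring
  refine HasSum.tsum_eq ?_
  rw [← hasSum_nat_add_iff' 1]
  convert h.neg using 1
  · ext n
    rw [hratio]
    ring
  · simp

theorem stmt6_general (a : ℝ) (ha1 : a < 1) (z : ℂ) :
    IntegrableOn (fun u : ℝ => (Complex.exp (z * (u : ℂ)) - 1) * ((u ^ (-a - 1) : ℝ) : ℂ))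
        (Set.Ioc (0:ℝ) 1) ∧
    (a : ℂ) * ∫ u in Set.Ioc (0:ℝ) 1, (Complex.exp (z * (u : ℂ)) - 1) * ((u ^ (-a - 1) : ℝ) : ℂ)
      = ∑' n : ℕ, ((a : ℂ) / (((n : ℂ) + 1) - (a : ℂ))) * z ^ (n + 1) / (Nat.factorial (n + 1) : ℂ) ∧
    (∑' n : ℕ, ((a : ℂ) / (((n : ℂ) + 1) - (a : ℂ))) * z ^ (n + 1) / (Nat.factorial (n + 1) : ℂ))
      = 1 - confluentF a z := by
  have hs : -2 < -a - 1 := by linarith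
  have hsum : HasSum
      (fun n : ℕ => (a : ℂ) / ((n : ℂ) + 1 - a) * z ^ (n + 1) / ((n + 1).factorial : ℂ))
      ((a : ℂ) * ∫ u in Ioc (0 : ℝ) 1, (Complex.exp (z * u) - 1) * ((u ^ (-a - 1) : ℝ) : ℂ)) := by
    refine ((hasSum_integral_Ioc_exp_sub_one_mul_rpow z hs).mul_left (a : ℂ)).congr_fun
      fun n => ?_
    push_cast
    ring
  refine ⟨integrableOn_Ioc_exp_sub_one_mul_rpow z hs, hsum.tsum_eq.symm, ?_⟩
  rw [confluentF_eq_one_sub ha1 z hsum, hsum.tsum_eq, sub_sub_cancel]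

/-- For `0 < a < 1` and `z ∈ ℂ`, the integral `∫_0^1 (e^{zu} - 1) u^{-a-1} du` converges
absolutely, and `a` times it equals `Σ_{n≥1} (a/(n-a)) zⁿ/n! = 1 - ₁F₁(-a; 1-a; z)`. -/
theorem stmt6 (a : ℝ) (ha0 : 0 < a) (ha1 : a < 1) (z : ℂ) :
    IntegrableOn (fun u : ℝ => (Complex.exp (z * (u : ℂ)) - 1) * ((u ^ (-a - 1) : ℝ) : ℂ))
        (Set.Ioc (0:ℝ) 1) ∧
    (a : ℂ) * ∫ u in Set.Ioc (0:ℝ) 1, (Complex.exp (z * (u : ℂ)) - 1) * ((u ^ (-a - 1) : ℝ) : ℂ)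
      = ∑' n : ℕ, ((a : ℂ) / (((n : ℂ) + 1) - (a : ℂ))) * z ^ (n + 1) / (Nat.factorial (n + 1) : ℂ) ∧
    (∑' n : ℕ, ((a : ℂ) / (((n : ℂ) + 1) - (a : ℂ))) * z ^ (n + 1) / (Nat.factorial (n + 1) : ℂ))
      = 1 - confluentF a z :=
  stmt6_general a ha1 z
end
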